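/- Let Λ be a left artinian ring satisfying condition (F). Then Λ satisfies condition (D): for every finitely generated indecomposable projective Λ-module P, every indecomposable submodule of P is either projective or simple. -/

import Mathlib

/-- rad X = (Jacobson radical of Λ) • X -/
def ModuleRad (Λ : Type) [Ring Λ] (X : Type) [AddCommGroup X] [Module Λ X] :
    Submodule Λ X :=
  Submodule.span Λ {z : X | ∃ r ∈ Ideal.jacobson (⊥ : Ideal Λ), ∃ x : X, z = r • x}

/-- composition length of a module, as the supremum of lengths of strictly
increasing chains of submodules from `⊥` to `⊤`. -/
noncomputable def ModuleLength (Λ : Type) [Ring Λ] (X : Type) [AddCommGroup X]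
    [Module Λ X] : ℕ∞ :=
  ⨆ n ∈ {n : ℕ | ∃ c : Fin (n + 1) → Submodule Λ X,
      StrictMono c ∧ c 0 = ⊥ ∧ c (Fin.last n) = ⊤}, (n : ℕ∞)

/-- a nonzero module that is not an internal direct sum of two nonzero submodules -/
def IndecomposableModule (Λ : Type) [Ring Λ] (X : Type) [AddCommGroup X]
    [Module Λ X] : Prop :=
  (∃ x : X, x ≠ 0) ∧
    ¬ ∃ A B : Submodule Λ X, A ≠ ⊥ ∧ B ≠ ⊥ ∧ IsCompl A B

/-- a minimal projective resolution of `M` -/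
structure MinProjRes (Λ : Type) [Ring Λ] (M : Type) [AddCommGroup M] [Module Λ M] where
  P : ℕ → Type
  acg : ∀ n, AddCommGroup (P n)
  mod : ∀ n, Module Λ (P n)
  proj : ∀ n, Module.Projective Λ (P n)
  fg : ∀ n, Module.Finite Λ (P n)
  d0 : P 0 →ₗ[Λ] M
  d : ∀ n, P (n + 1) →ₗ[Λ] P n
  surj : Function.Surjective d0
  exact0 : LinearMap.range (d 0) = LinearMap.ker d0
  exact : ∀ n, LinearMap.range (d (n + 1)) = LinearMap.ker (d n)
  min0 : LinearMap.ker d0 ≤ ModuleRad Λ (P 0)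
  min : ∀ n, LinearMap.ker (d n) ≤ ModuleRad Λ (P (n + 1))

attribute [instance] MinProjRes.acg MinProjRes.mod

/-- the projective dimension read off from a minimal projective resolution:
`sup {n | Pₙ ≠ 0}` in `ℕ∞` -/
noncomputable def MinProjRes.pd {Λ : Type} [Ring Λ] {M : Type} [AddCommGroup M]
    [Module Λ M] (res : MinProjRes Λ M) : ℕ∞ :=
  ⨆ n ∈ {n : ℕ | ∃ x : res.P n, x ≠ 0}, (n : ℕ∞)

/-- Condition (F) -/
def ConditionF (Λ : Type) [Ring Λ] : Prop :=
  ∀ (P : Type) [AddCommGroup P] [Module Λ P],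
    Module.Finite Λ P → Module.Projective Λ P → IndecomposableModule Λ P →
      (Module.Projective Λ ↥(ModuleRad Λ P) ∨ IsSimpleModule Λ ↥(ModuleRad Λ P))


/-!
Over an artinian ring, a finitely generated indecomposable projective module `B` has a unique
maximal submodule: a lift of one quotient map through another maximal submodule is, by Fitting's
lemma, nilpotent, so one minus it is invertible yet lands in the first maximal submodule. Hence a
map from an indecomposable module into `B` is either an isomorphism or lands in `rad B`.

Embed the indecomposable `M` into `Q × T` with `Q` finitely generated projective and `T`
semisimple, and split `Q = A ⊕ B` with `B` indecomposable. If `M → B` is an isomorphism, `M` is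
projective. Otherwise `M` embeds into `(A × rad B) × T` or into `A × (rad B × T)`, according to
whether `rad B` is projective or simple by (F), and the length of the projective factor drops.
When it reaches zero, `M` is an indecomposable submodule of a semisimple module, hence simple.
-/

theorem IsCompl.isCompl_sup_of_disjoint_of_sup_eq {α : Type*} [Lattice α] [BoundedOrder α]
    [IsModularLattice α] {a b b₁ b₂ : α} (h : IsCompl a b) (hdisj : Disjoint b₁ b₂)
    (hsup : b₁ ⊔ b₂ = b) : IsCompl (a ⊔ b₂) b₁ where
  disjoint := hdisj.symm.disjoint_sup_left_of_disjoint_sup_right <| by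
    rw [sup_comm, hsup]; exact h.disjoint
  codisjoint := by rw [codisjoint_iff, sup_assoc, sup_comm b₂, hsup, h.sup_eq_top]

section Modules

variable {Λ : Type} [Ring Λ] {X Y : Type} [AddCommGroup X] [Module Λ X] [AddCommGroup Y]
  [Module Λ Y]

theorem isSemisimpleModule_of_subsingleton [Subsingleton X] : IsSemisimpleModule Λ X := by
  have := (Submodule.subsingleton_iff Λ).mpr ‹Subsingleton X›
  exact (isSemisimpleModule_iff Λ X).mpr Subsingleton.instComplementedLattice

theorem IsSemisimpleModule.prod [IsSemisimpleModule Λ X] [IsSemisimpleModule Λ Y] :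
    IsSemisimpleModule Λ (X × Y) := by
  have := IsSemisimpleModule.sup (.range (LinearMap.inl Λ X Y)) (.range (LinearMap.inr Λ X Y))
  rw [LinearMap.sup_range_inl_inr] at this
  exact .congr Submodule.topEquiv.symm

theorem Module.Projective.of_isCompl [Module.Projective Λ X] {A B : Submodule Λ X}
    (h : IsCompl A B) : Module.Projective Λ A :=
  .of_split A.subtype (A.projectionOnto B h) (A.projectionOnto_comp_subtype h)

theorem IsCompl.eq_zero_of_projectionOnto_eq_zero {A B : Submodule Λ X} (h : IsCompl A B)
    {x : X} (hA : A.projectionOnto B h x = 0) (hB : B.projectionOnto A h.symm x = 0) : x = 0 :=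
  Submodule.disjoint_def.mp h.disjoint x ((Submodule.projectionOnto_apply_eq_zero_iff h.symm).mp hB)
    ((Submodule.projectionOnto_apply_eq_zero_iff h).mp hA)

theorem length_eq_add_of_isCompl {A B : Submodule Λ X} (h : IsCompl A B) :
    Module.length Λ X = Module.length Λ A + Module.length Λ B :=
  (Submodule.prodEquivOfIsCompl A B h).length_eq.symm.trans (Module.length_prod Λ A B)

theorem moduleRad_eq_jacobson_smul_top : ModuleRad Λ X = Ring.jacobson Λ • ⊤ := by
  refine le_antisymm (Submodule.span_le.mpr ?_) (Submodule.smul_le.mpr fun r hr x _ => ?_)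
  · rintro _ ⟨r, hr, x, rfl⟩
    exact Submodule.smul_mem_smul (Ideal.jacobson_bot (R := Λ) ▸ hr) trivial
  · exact Submodule.subset_span ⟨r, Ideal.jacobson_bot (R := Λ) ▸ hr, x, rfl⟩

theorem moduleRad_ne_top [IsNoetherian Λ X] [Nontrivial X] : ModuleRad Λ X ≠ ⊤ :=
  moduleRad_eq_jacobson_smul_top (Λ := Λ) (X := X) ▸ (Submodule.jacobson_smul_lt_top ⊤).ne

theorem isSemisimpleModule_quotient_jacobson_smul_top [IsArtinianRing Λ] :
    IsSemisimpleModule Λ (X ⧸ Ring.jacobson Λ • (⊤ : Submodule Λ X)) := by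
  have h := Module.isTorsionBySet_quotient_ideal_smul X (Ring.jacobson Λ)
  let := h.module
  exact (h.semilinearMap.isSemisimpleModule_iff_of_bijective Function.bijective_id).2 inferInstance

theorem moduleRad_eq_jacobson [IsArtinianRing Λ] : ModuleRad Λ X = Module.jacobson Λ X := by
  have := isSemisimpleModule_quotient_jacobson_smul_top (Λ := Λ) (X := X)
  rw [moduleRad_eq_jacobson_smul_top]
  exact le_antisymm (Ring.jacobson_smul_top_le Λ X)
    (Module.jacobson_le_of_eq_bot (IsSemisimpleModule.jacobson_eq_bot Λ _))

namespace IndecomposableModule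

theorem eq_bot_or_eq_bot_of_isCompl (h : IndecomposableModule Λ X) {A B : Submodule Λ X}
    (hAB : IsCompl A B) : A = ⊥ ∨ B = ⊥ := by
  by_contra! hne
  exact h.2 ⟨A, B, hne.1, hne.2, hAB⟩

theorem nontrivial (h : IndecomposableModule Λ X) : Nontrivial X :=
  let ⟨x, hx⟩ := h.1; ⟨x, 0, hx⟩

theorem isSimpleModule [IsSemisimpleModule Λ X] (h : IndecomposableModule Λ X) :
    IsSimpleModule Λ X := by
  have := h.nontrivial
  have : IsSimpleOrder (Submodule Λ X) := ⟨fun N => ?_⟩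
  · exact ⟨⟩
  obtain ⟨C, hC⟩ := exists_isCompl N
  rcases h.eq_bot_or_eq_bot_of_isCompl hC with hN | rfl
  exacts [.inl hN, .inr (eq_top_of_isCompl_bot hC)]

theorem bijective_of_surjective [Module.Projective Λ Y] [Nontrivial Y]
    (hX : IndecomposableModule Λ X) {g : X →ₗ[Λ] Y} (hg : Function.Surjective g) :
    Function.Bijective g := by
  obtain ⟨s, hs⟩ := Module.projective_lifting_property g LinearMap.id hg
  have hgs : ∀ y, g (s y) = y := LinearMap.congr_fun hs
  have hidem : IsIdempotentElem (s ∘ₗ g) := LinearMap.ext fun x => by simp [hgs]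
  refine ⟨?_, hg⟩
  rcases hX.eq_bot_or_eq_bot_of_isCompl (LinearMap.IsIdempotentElem.isCompl hidem) with
    hrange | hker
  · obtain ⟨y, hy⟩ := exists_ne (0 : Y)
    obtain ⟨x, rfl⟩ := hg y
    have : s (g x) = 0 := by simpa using LinearMap.congr_fun (LinearMap.range_eq_bot.mp hrange) x
    exact absurd (by rw [← hgs (g x), this, map_zero]) hy
  · exact Function.Injective.of_comp (f := s) (LinearMap.ker_eq_bot.mp hker)

theorem isNilpotent_of_not_surjective [IsArtinian Λ X] [IsNoetherian Λ X]
    (hX : IndecomposableModule Λ X) {f : Module.End Λ X} (hf : ¬ Function.Surjective f) :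
    IsNilpotent f := by
  obtain ⟨n, hn, hc⟩ := ((Filter.eventually_ge_atTop 1).and
    f.eventually_isCompl_ker_pow_range_pow).exists
  refine (hX.eq_bot_or_eq_bot_of_isCompl hc).elim (fun hker => absurd ?_ hf)
    fun hrange => ⟨n, LinearMap.range_eq_bot.mp hrange⟩
  have htop : LinearMap.range (f ^ n) = ⊤ := by simpa [hker] using hc.sup_eq_top
  obtain ⟨k, rfl⟩ := Nat.exists_eq_add_of_le' hn
  rw [← LinearMap.range_eq_top, eq_top_iff, ← htop, pow_succ']
  exact LinearMap.range_comp_le_range _ _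

theorem eq_of_isCoatom [IsArtinian Λ X] [IsNoetherian Λ X] [Module.Projective Λ X]
    (hX : IndecomposableModule Λ X) {m₁ m₂ : Submodule Λ X} (h₁ : IsCoatom m₁)
    (h₂ : IsCoatom m₂) : m₁ = m₂ := by
  by_contra hne
  have hsurj : Function.Surjective (m₁.mkQ ∘ₗ m₂.subtype) := by
    rw [← LinearMap.range_eq_top, LinearMap.range_comp, Submodule.range_subtype,
      Submodule.map_mkQ_eq_top]
    exact h₁.sup_eq_top_of_ne h₂ hne
  obtain ⟨h, hh⟩ := Module.projective_lifting_property _ m₁.mkQ hsurj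
  set f : Module.End Λ X := m₂.subtype ∘ₗ h
  have hf : ¬ Function.Surjective f := fun hf => h₂.1 <| top_le_iff.mp <|
    (LinearMap.range_eq_top.mpr hf).ge.trans <|
      (LinearMap.range_comp_le_range _ _).trans (Submodule.range_subtype m₂).le
  have hunit := (hX.isNilpotent_of_not_surjective hf).isUnit_one_sub
  have hmkQ : m₁.mkQ ∘ₗ (1 - f) = 0 := by
    rw [LinearMap.comp_sub, ← LinearMap.comp_assoc, hh]; exact sub_self _
  refine h₁.1 (top_le_iff.mp ?_)
  rw [← LinearMap.range_eq_top.mpr ((Module.End.isUnit_iff _).mp hunit).2, ← m₁.ker_mkQ]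
  exact LinearMap.range_le_ker_iff.mpr hmkQ

theorem le_moduleRad_of_ne_top [IsArtinianRing Λ] [Module.Finite Λ X] [Module.Projective Λ X]
    (hX : IndecomposableModule Λ X) {N : Submodule Λ X} (hN : N ≠ ⊤) :
    N ≤ ModuleRad Λ X := by
  obtain ⟨m, hm, hNm⟩ := (eq_top_or_exists_le_coatom N).resolve_left hN
  rw [moduleRad_eq_jacobson, Module.jacobson]
  exact le_sInf fun m' hm' => hNm.trans (hX.eq_of_isCoatom hm hm').le

theorem bijective_or_range_le_moduleRad [IsArtinianRing Λ] [Module.Finite Λ Y]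
    [Module.Projective Λ Y] (hX : IndecomposableModule Λ X) (hY : IndecomposableModule Λ Y)
    (g : X →ₗ[Λ] Y) : Function.Bijective g ∨ LinearMap.range g ≤ ModuleRad Λ Y := by
  have := hY.nontrivial
  by_cases hg : Function.Surjective g
  · exact .inl (hX.bijective_of_surjective hg)
  · exact .inr (hY.le_moduleRad_of_ne_top (mt LinearMap.range_eq_top.mp hg))

end IndecomposableModule

theorem exists_isCompl_indecomposableModule [IsArtinian Λ X] [Nontrivial X] :
    ∃ A B : Submodule Λ X, IsCompl A B ∧ IndecomposableModule Λ B := by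
  obtain ⟨B, ⟨hB0, A, hAB⟩, hmin⟩ :=
    IsArtinian.set_has_minimal {B : Submodule Λ X | B ≠ ⊥ ∧ ∃ A, IsCompl A B}
      ⟨⊤, top_ne_bot, ⊥, isCompl_bot_top⟩
  refine ⟨A, B, hAB, ?_, ?_⟩
  · obtain ⟨x, hx, hx0⟩ := (Submodule.ne_bot_iff B).mp hB0
    exact ⟨⟨x, hx⟩, by simpa using hx0⟩
  rintro ⟨B₁, B₂, hB₁, hB₂, h12⟩
  have hinj := B.injective_subtype
  have hB₁' : B₁.map B.subtype ≠ ⊥ := by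
    simpa using (Submodule.map_strictMono_of_injective hinj (bot_lt_iff_ne_bot.mpr hB₁)).ne'
  refine hmin (B₁.map B.subtype) ⟨hB₁', A ⊔ B₂.map B.subtype, ?_⟩ ?_
  · refine hAB.isCompl_sup_of_disjoint_of_sup_eq (Submodule.disjoint_map hinj h12.disjoint) ?_
    rw [← Submodule.map_sup, h12.sup_eq_top, Submodule.map_top, Submodule.range_subtype]
  · have hlt : B₁ < ⊤ :=
      lt_top_iff_ne_top.mpr fun h => hB₂ (eq_bot_of_isCompl_top (h ▸ h12).symm)
    simpa using Submodule.map_strictMono_of_injective hinj hlt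

end Modules

theorem projective_or_isSimpleModule_of_injective {Λ : Type} [Ring Λ] [IsArtinianRing Λ]
    (hF : ConditionF Λ) {M : Type} [AddCommGroup M] [Module Λ M] (hM : IndecomposableModule Λ M)
    (Q T : Type) [AddCommGroup Q] [Module Λ Q] [Module.Finite Λ Q] [Module.Projective Λ Q]
    [AddCommGroup T] [Module Λ T] [IsSemisimpleModule Λ T]
    (f : M →ₗ[Λ] Q × T) (hf : Function.Injective f) :
    Module.Projective Λ M ∨ IsSimpleModule Λ M := by
  induction hn : Module.length Λ Q using WellFoundedLT.induction generalizing Q T with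
  | _ n ih =>
  subst hn
  rcases subsingleton_or_nontrivial Q with hQ | hQ
  · have : IsSemisimpleModule Λ M := .of_injective (LinearMap.snd Λ Q T ∘ₗ f)
      fun a b hab => hf (Prod.ext (Subsingleton.elim _ _) hab)
    exact .inr hM.isSimpleModule
  obtain ⟨A, B, hAB, hB⟩ := exists_isCompl_indecomposableModule (Λ := Λ) (X := Q)
  have := Module.Projective.of_isCompl hAB
  have := Module.Projective.of_isCompl hAB.symm
  set gA := A.projectionOnto B hAB ∘ₗ LinearMap.fst Λ Q T ∘ₗ f
  set gB := B.projectionOnto A hAB.symm ∘ₗ LinearMap.fst Λ Q T ∘ₗ f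
  set gT := LinearMap.snd Λ Q T ∘ₗ f
  have hzero : ∀ m, gA m = 0 → gB m = 0 → gT m = 0 → m = 0 := fun m hA hB hT =>
    (injective_iff_map_eq_zero f).mp hf m <|
      Prod.ext (hAB.eq_zero_of_projectionOnto_eq_zero hA hB) hT
  rcases hM.bijective_or_range_le_moduleRad hB gB with hbij | hrad
  · exact .inl (.of_equiv (LinearEquiv.ofBijective gB hbij).symm)
  set gR := gB.codRestrict (ModuleRad Λ B) fun m => hrad ⟨m, rfl⟩
  have hlen := length_eq_add_of_isCompl hAB
  have hA : Module.length Λ A ≠ ⊤ := Module.length_ne_top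
  have := hB.nontrivial
  rcases hF B inferInstance inferInstance hB with hR | hR
  · refine ih _ ?_ (A × ModuleRad Λ B) T ((gA.prod gR).prod gT) ?_ rfl
    · rw [hlen, Module.length_prod]
      exact WithTop.add_lt_add_left hA (Submodule.length_lt moduleRad_ne_top)
    · refine (injective_iff_map_eq_zero _).mpr fun m hm => ?_
      simp only [LinearMap.prod_apply, Function.prod_apply, Prod.mk_eq_zero] at hm
      exact hzero m hm.1.1 (congrArg Subtype.val hm.1.2) hm.2
  · have := IsSemisimpleModule.prod (Λ := Λ) (X := ModuleRad Λ B) (Y := T)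
    refine ih _ ?_ A (ModuleRad Λ B × T) (gA.prod (gR.prod gT)) ?_ rfl
    · rw [hlen]
      exact (add_zero _).symm.trans_lt (WithTop.add_lt_add_left hA Module.length_pos)
    · refine (injective_iff_map_eq_zero _).mpr fun m hm => ?_
      simp only [LinearMap.prod_apply, Function.prod_apply, Prod.mk_eq_zero] at hm
      exact hzero m hm.1 (congrArg Subtype.val hm.2.1) hm.2.2

/-- a left artinian ring satisfying (F) satisfies (D): every
indecomposable submodule of a finitely generated indecomposable projective
module is projective or simple. -/
theorem conditionF_implies_conditionD (Λ : Type) [Ring Λ] [IsArtinianRing Λ]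
    (hF : ConditionF Λ) :
    ∀ (P : Type) [AddCommGroup P] [Module Λ P],
      Module.Finite Λ P → Module.Projective Λ P → IndecomposableModule Λ P →
        ∀ N : Submodule Λ P, IndecomposableModule Λ ↥N →
          Module.Projective Λ ↥N ∨ IsSimpleModule Λ ↥N := by
  intro P _ _ _ _ _ N hN
  have : IsSemisimpleModule Λ PUnit := isSemisimpleModule_of_subsingleton
  exact projective_or_isSimpleModule_of_injective hF hN P PUnit (N.subtype.prod 0)
    fun a b hab => N.injective_subtype (congrArg Prod.fst hab)
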